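/- Let n ≥ 0, μ < 0, S := {z ∈ ℂ^{n+1} | ‖z‖² = −2μ}, and p(z) := (√(−2μ)/‖z‖)·z. For smooth f : ℂ^{n+1} \ {0} → ℂ define, on U := (ℂ^{n+1} \ {0}) \ S, the function p_J(f)(z) := (f(p(z)) − f(z)) / (½‖z‖² + μ), and K(f)(z) := ½ E(p_J(f))(z), where E is the holomorphic Euler operator E g(z) := ½(Dg(z)[z] − i·Dg(z)[i•z]). If h : ℂ^{n+1} \ {0} → ℂ is smooth and homogeneous (h(c•z) = h(z) for all c ∈ ℂ \ {0} and z ≠ 0), then for every smooth f and every z ∈ U one has K(f·h)(z) = K(f)(z)·h(z). -/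

import Mathlib

/-- The holomorphic Euler operator `E g(z) = ∑ z^k ∂g/∂z^k
  = ½(Dg(z)[z] − i·Dg(z)[i•z])`. -/
noncomputable def eulerE {n : ℕ} (g : EuclideanSpace ℂ (Fin (n+1)) → ℂ) :
    EuclideanSpace ℂ (Fin (n+1)) → ℂ :=
  fun z => (1/2) * (fderiv ℝ g z z - Complex.I * fderiv ℝ g z (Complex.I • z))

/-- `p_J(f)(z) = (f(p(z)) − f(z)) / (½‖z‖² + μ)` with `p` the radial projection
onto the sphere `‖z‖² = −2μ`. -/
noncomputable def pJop {n : ℕ} (μ : ℝ) (f : EuclideanSpace ℂ (Fin (n+1)) → ℂ) :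
    EuclideanSpace ℂ (Fin (n+1)) → ℂ :=
  fun z => (f ((Real.sqrt (-2*μ) / ‖z‖) • z) - f z) / ((‖z‖^2/2 + μ : ℝ) : ℂ)

/-- The operator `K f = ½ E(p_J(f))`. -/
noncomputable def Kop {n : ℕ} (μ : ℝ) (f : EuclideanSpace ℂ (Fin (n+1)) → ℂ) :
    EuclideanSpace ℂ (Fin (n+1)) → ℂ :=
  fun z => (1/2) * eulerE (pJop μ f) z

/-- If `h` is locally constant along the line `t ↦ z + t • v`, its derivative
along `v` vanishes. -/
lemma fderiv_apply_eq_zero_of_locally_const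
    {E : Type*} [NormedAddCommGroup E] [NormedSpace ℝ E]
    (h : E → ℂ) (z v : E) (hd : DifferentiableAt ℝ h z)
    (hc : ∀ᶠ t : ℝ in nhds 0, h (z + t • v) = h z) :
    fderiv ℝ h z v = 0 := by
  have hcurve : HasFDerivAt (fun t : ℝ => z + t • v)
      ((ContinuousLinearMap.id ℝ ℝ).smulRight v) 0 := by
    have : HasFDerivAt (fun t : ℝ => ((ContinuousLinearMap.id ℝ ℝ).smulRight v) t + z)
        ((ContinuousLinearMap.id ℝ ℝ).smulRight v) 0 :=
      ((ContinuousLinearMap.id ℝ ℝ).smulRight v).hasFDerivAt.add_const z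
    simpa [add_comm] using this
  have hcomp : HasFDerivAt (fun t : ℝ => h (z + t • v))
      ((fderiv ℝ h z).comp ((ContinuousLinearMap.id ℝ ℝ).smulRight v)) 0 := by
    have hz' : HasFDerivAt h (fderiv ℝ h z) ((fun t : ℝ => z + t • v) 0) := by
      simpa using hd.hasFDerivAt
    exact hz'.comp 0 hcurve
  have hconst : HasFDerivAt (fun t : ℝ => h (z + t • v)) (0 : ℝ →L[ℝ] ℂ) 0 :=
    (hasFDerivAt_const (h z) (0:ℝ)).congr_of_eventuallyEq hc
  have huniq := hcomp.unique hconst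
  have happ := congrArg (fun L : ℝ →L[ℝ] ℂ => L 1) huniq
  simpa using happ

theorem Kop_passes_through_homogeneous_factor
    (n : ℕ) (μ : ℝ) (hμ : μ < 0)
    (f : EuclideanSpace ℂ (Fin (n+1)) → ℂ)
    (hf : ContDiffOn ℝ (⊤ : ℕ∞) f {z | z ≠ 0})
    (h : EuclideanSpace ℂ (Fin (n+1)) → ℂ)
    (hh : ContDiffOn ℝ (⊤ : ℕ∞) h {z | z ≠ 0})
    (hhom : ∀ c : ℂ, c ≠ 0 → ∀ z : EuclideanSpace ℂ (Fin (n+1)), z ≠ 0 →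
      h (c • z) = h z) :
    ∀ z : EuclideanSpace ℂ (Fin (n+1)), z ≠ 0 → ‖z‖^2 ≠ -2*μ →
      Kop μ (f * h) z = Kop μ f z * h z := by
  intro z hz hsph
  have hO : IsOpen {w : EuclideanSpace ℂ (Fin (n+1)) | w ≠ 0} := isOpen_ne
  have hsqrt : Real.sqrt (-2*μ) > 0 := Real.sqrt_pos.2 (by linarith)
  -- h is invariant under the radial projection
  have hproj : ∀ w : EuclideanSpace ℂ (Fin (n+1)), w ≠ 0 →
      h ((Real.sqrt (-2*μ) / ‖w‖) • w) = h w := by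
    intro w hw
    have hcne : ((Real.sqrt (-2*μ) / ‖w‖ : ℝ) : ℂ) ≠ 0 := by
      simp only [ne_eq, Complex.ofReal_eq_zero]
      exact ne_of_gt (div_pos hsqrt (norm_pos_iff.2 hw))
    have := hhom _ hcne w hw
    rwa [Complex.coe_smul] at this
  -- pJop of the product equals (pJop f) * h on the set of nonzero vectors
  have funeq : ∀ w : EuclideanSpace ℂ (Fin (n+1)), w ≠ 0 →
      pJop μ (f * h) w = pJop μ f w * h w := by
    intro w hw
    simp only [pJop, Pi.mul_apply, hproj w hw]
    rw [div_mul_eq_mul_div, sub_mul]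
  have hmemnhds : {w : EuclideanSpace ℂ (Fin (n+1)) | w ≠ 0} ∈ nhds z := hO.mem_nhds hz
  have heq : pJop μ (f * h) =ᶠ[nhds z] fun w => pJop μ f w * h w :=
    Filter.eventuallyEq_of_mem hmemnhds (fun w hw => funeq w hw)
  -- differentiability facts
  have hnorm : DifferentiableAt ℝ (fun w : EuclideanSpace ℂ (Fin (n+1)) => ‖w‖) z :=
    differentiableAt_fun_id.norm ℂ hz
  have hscal : DifferentiableAt ℝ
      (fun w : EuclideanSpace ℂ (Fin (n+1)) => Real.sqrt (-2*μ) / ‖w‖) z :=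
    by
      simp only [div_eq_mul_inv]
      exact (differentiableAt_const _).mul (hnorm.inv (norm_ne_zero_iff.2 hz))
  have hP : DifferentiableAt ℝ
      (fun w : EuclideanSpace ℂ (Fin (n+1)) => (Real.sqrt (-2*μ) / ‖w‖) • w) z :=
    hscal.smul differentiableAt_fun_id
  have hPz : (Real.sqrt (-2*μ) / ‖z‖) • z ≠ 0 :=
    smul_ne_zero (ne_of_gt (div_pos hsqrt (norm_pos_iff.2 hz))) hz
  have hfP : DifferentiableAt ℝ
      (fun w : EuclideanSpace ℂ (Fin (n+1)) => f ((Real.sqrt (-2*μ) / ‖w‖) • w)) z := by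
    have hfd : DifferentiableAt ℝ f ((Real.sqrt (-2*μ) / ‖z‖) • z) :=
      (hf.contDiffAt (hO.mem_nhds hPz)).differentiableAt (by simp)
    exact DifferentiableAt.comp (g := f)
      (f := fun w : EuclideanSpace ℂ (Fin (n+1)) => (Real.sqrt (-2*μ) / ‖w‖) • w)
      z hfd hP
  have hfz : DifferentiableAt ℝ f z :=
    (hf.contDiffAt (hO.mem_nhds hz)).differentiableAt (by simp)
  have hhz : DifferentiableAt ℝ h z :=
    (hh.contDiffAt (hO.mem_nhds hz)).differentiableAt (by simp)
  have hnsq : DifferentiableAt ℝ (fun w : EuclideanSpace ℂ (Fin (n+1)) => ‖w‖^2) z :=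
    differentiableAt_fun_id.norm_sq ℂ
  have hdenR : DifferentiableAt ℝ
      (fun w : EuclideanSpace ℂ (Fin (n+1)) => (‖w‖^2/2 + μ : ℝ)) z :=
    by
      simp only [div_eq_mul_inv]
      exact (hnsq.mul_const _).add_const μ
  have hden : DifferentiableAt ℝ
      (fun w : EuclideanSpace ℂ (Fin (n+1)) => ((‖w‖^2/2 + μ : ℝ) : ℂ)) z :=
    Complex.ofRealCLM.differentiableAt.comp z hdenR
  have hdenne : ((‖z‖^2/2 + μ : ℝ) : ℂ) ≠ 0 := by
    simp only [ne_eq, Complex.ofReal_eq_zero]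
    intro hcon
    exact hsph (by linarith)
  have hg : DifferentiableAt ℝ (pJop μ f) z := by
    unfold pJop
    simp only [div_eq_mul_inv]
    exact (hfP.sub hfz).mul (hden.inv hdenne)
  -- derivative of h along z and I • z vanishes
  have hE1 : fderiv ℝ h z z = 0 := by
    apply fderiv_apply_eq_zero_of_locally_const h z z hhz
    filter_upwards [eventually_gt_nhds (show (-1 : ℝ) < 0 by norm_num)] with t ht
    have h1 : ((1 + t : ℝ) : ℂ) ≠ 0 := by
      simp only [ne_eq, Complex.ofReal_eq_zero]
      linarith
    have hth := hhom _ h1 z hz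
    rw [Complex.coe_smul] at hth
    rw [← hth]
    congr 1
    rw [add_smul, one_smul]
  have hE2 : fderiv ℝ h z (Complex.I • z) = 0 := by
    apply fderiv_apply_eq_zero_of_locally_const h z (Complex.I • z) hhz
    apply Filter.Eventually.of_forall
    intro t
    have h1 : (1 + (t : ℂ) * Complex.I) ≠ 0 := by
      intro hcon
      have := congrArg Complex.re hcon
      simp at this
    have hth := hhom _ h1 z hz
    rw [← hth]
    congr 1
    rw [add_smul, one_smul, mul_smul, Complex.coe_smul]
  -- compute the fderiv of pJop μ (f*h)
  have hfd_eq : fderiv ℝ (pJop μ (f * h)) z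
      = fderiv ℝ (fun w => pJop μ f w * h w) z := heq.fderiv_eq
  have hmul : fderiv ℝ (fun w => pJop μ f w * h w) z
      = pJop μ f z • fderiv ℝ h z + h z • fderiv ℝ (pJop μ f) z :=
    fderiv_mul hg hhz
  simp only [Kop, eulerE, hfd_eq, hmul, ContinuousLinearMap.add_apply,
    ContinuousLinearMap.smul_apply, hE1, hE2, smul_eq_mul, mul_zero, zero_add]
  ring
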